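/- arXiv:1603.05437 — 2 statements merged into one kernel-verified Lean document; each statement's English description precedes it below -/
import Mathlib

section
/- For every n ≥ 1, every t ≥ 0, and every natural number k that is not divisible by N, one has E[(W^n(t))^k] = 0; moreover E[(W^n(t))^N] = α·⌊nt⌋/n. -/
open MeasureTheory ProbabilityTheory Filter

/-- The rescaled complex random walk `W^n(t) = n^{-1/N} ∑_{k=1}^{⌊nt⌋} ξ_k`. -/
noncomputable def W {Ω : Type*} (ξ : ℕ → Ω → ℂ) (N n : ℕ) (t : ℝ) (ω : Ω) : ℂ :=
  (((n : ℝ) ^ (-(1 / (N : ℝ))) : ℝ) : ℂ) * ∑ k ∈ Finset.Icc 1 ⌊(n : ℝ) * t⌋₊, ξ k ω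

/-!
The law of each `ξ k` is uniform on the `N`-th roots of `α`, so `E[ξ^p] = β^p` when `N ∣ p` and
`E[ξ^p] = 0` otherwise (a geometric sum over roots of unity). Expanding `(S + ξ)^k` binomially
and using independence, the vanishing of the moments off multiples of `N` passes to every partial
sum `S`; in `(S + ξ)^N` only the two extreme terms survive, so `E[S_m^N] = m β^N = m α`.
The scaling `n^{-1/N}` contributes the factor `1/n`.
-/

open Finset Complex
open scoped Real ENNReal

noncomputable def uniformOnRoots (N : ℕ) (β : ℂ) : Measure ℂ :=
  (N : ℝ≥0∞)⁻¹ • ∑ j ∈ range N, Measure.dirac (β * exp (2 * π * I * j / N))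

lemma sum_exp_two_pi_I_mul_pow {N : ℕ} (hN : N ≠ 0) (p : ℕ) :
    ∑ j ∈ range N, exp (2 * π * I * j / N) ^ p = if N ∣ p then (N : ℂ) else 0 := by
  have hζ := isPrimitiveRoot_exp N hN
  have hpow : ∀ j : ℕ, exp (2 * π * I * j / N) ^ p = (exp (2 * π * I / N) ^ p) ^ j := by
    intro j
    rw [← pow_mul, mul_comm p j, pow_mul, ← exp_nat_mul (2 * π * I / N) j]
    ring_nf
  simp_rw [hpow]
  split_ifs with hp
  · simp [(hζ.pow_eq_one_iff_dvd p).2 hp]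
  · rw [geom_sum_eq (mt (hζ.pow_eq_one_iff_dvd p).1 hp), ← pow_mul, mul_comm p N, pow_mul,
      hζ.pow_eq_one, one_pow, sub_self, zero_div]

lemma integral_pow_uniformOnRoots {N : ℕ} (hN : N ≠ 0) (β : ℂ) (p : ℕ) :
    ∫ x, x ^ p ∂uniformOnRoots N β = if N ∣ p then β ^ p else 0 := by
  rw [uniformOnRoots, integral_smul_measure,
    integral_finsetSum_measure fun j _ ↦ integrable_dirac enorm_lt_top]
  simp only [ENNReal.toReal_inv, ENNReal.toReal_natCast, integral_dirac, mul_pow, ← mul_sum,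
    sum_exp_two_pi_I_mul_pow hN]
  split_ifs
  · rw [real_smul]
    push_cast
    field_simp
  · simp

lemma ae_norm_le_uniformOnRoots (N : ℕ) (β : ℂ) : ∀ᵐ x ∂uniformOnRoots N β, ‖x‖ ≤ ‖β‖ := by
  refine Measure.ae_smul_measure (ae_finsetSum_measure_iff.2 fun j _ ↦ ?_) _
  rw [ae_dirac_eq, eventually_pure, norm_mul, norm_exp]
  simp

lemma ae_norm_sum_le {Ω ι : Type*} [MeasurableSpace Ω] {μ : Measure Ω} {ξ : ι → Ω → ℂ} {C : ℝ}
    (hC : ∀ᵐ ω ∂μ, ∀ i, ‖ξ i ω‖ ≤ C) (s : Finset ι) :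
    ∀ᵐ ω ∂μ, ‖∑ i ∈ s, ξ i ω‖ ≤ #s * C := by
  filter_upwards [hC] with ω hω
  simpa using norm_sum_le_of_le s fun i _ ↦ hω i

namespace ProbabilityTheory

variable {Ω : Type*} [MeasurableSpace Ω] {μ : Measure Ω} [IsProbabilityMeasure μ]

lemma IndepFun.integral_add_pow {X Y : Ω → ℂ} (hXY : IndepFun X Y μ) (hX : AEMeasurable X μ)
    (hY : AEMeasurable Y μ) {C D : ℝ} (hXC : ∀ᵐ ω ∂μ, ‖X ω‖ ≤ C) (hYD : ∀ᵐ ω ∂μ, ‖Y ω‖ ≤ D)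
    (k : ℕ) :
    ∫ ω, (X ω + Y ω) ^ k ∂μ =
      ∑ i ∈ range (k + 1), (∫ ω, X ω ^ i ∂μ) * (∫ ω, Y ω ^ (k - i) ∂μ) * k.choose i := by
  have hint : ∀ i j, Integrable (fun ω ↦ X ω ^ i * Y ω ^ j) μ := fun i j ↦
    .of_bound ((hX.pow_const i).mul (hY.pow_const j)).aestronglyMeasurable (C ^ i * D ^ j) <| by
      filter_upwards [hXC, hYD] with ω hx hy
      rw [norm_mul, norm_pow, norm_pow]
      have hC0 : 0 ≤ C := (norm_nonneg _).trans hx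
      gcongr
  simp_rw [add_pow]
  rw [integral_finsetSum _ fun i _ ↦ (hint i (k - i)).mul_const _]
  refine sum_congr rfl fun i _ ↦ ?_
  rw [integral_mul_const, hXY.integral_fun_comp_mul_comp (f := (· ^ i)) (g := (· ^ (k - i))) hX hY
    (continuous_pow i).aestronglyMeasurable (continuous_pow (k - i)).aestronglyMeasurable]

variable {ι : Type*} [DecidableEq ι] {ξ : ι → Ω → ℂ} {C : ℝ}

lemma iIndepFun.integral_add_sum_pow (hmeas : ∀ i, Measurable (ξ i)) (hindep : iIndepFun ξ μ)
    (hC : ∀ᵐ ω ∂μ, ∀ i, ‖ξ i ω‖ ≤ C) {s : Finset ι} {a : ι} (ha : a ∉ s) (k : ℕ) :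
    ∫ ω, (∑ i ∈ insert a s, ξ i ω) ^ k ∂μ =
      ∑ i ∈ range (k + 1),
        (∫ ω, (∑ i ∈ s, ξ i ω) ^ i ∂μ) * (∫ ω, ξ a ω ^ (k - i) ∂μ) * k.choose i := by
  have hindep' : IndepFun (fun ω ↦ ∑ i ∈ s, ξ i ω) (ξ a) μ := by
    simpa only [sum_fn] using hindep.indepFun_finsetSum_of_notMem hmeas ha
  simp_rw [sum_insert ha, add_comm (ξ a _)]
  exact hindep'.integral_add_pow (s.aemeasurable_fun_sum fun i _ ↦ (hmeas i).aemeasurable)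
    (hmeas a).aemeasurable (ae_norm_sum_le hC s) (hC.mono fun ω hω ↦ hω a) k

variable {N : ℕ}

lemma iIndepFun.integral_sum_pow_eq_zero (hmeas : ∀ i, Measurable (ξ i))
    (hindep : iIndepFun ξ μ) (hC : ∀ᵐ ω ∂μ, ∀ i, ‖ξ i ω‖ ≤ C)
    (hmom : ∀ i p, ¬ N ∣ p → ∫ ω, ξ i ω ^ p ∂μ = 0) (s : Finset ι) {k : ℕ} (hk : ¬ N ∣ k) :
    ∫ ω, (∑ i ∈ s, ξ i ω) ^ k ∂μ = 0 := by
  induction s using Finset.induction_on generalizing k with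
  | empty => simp [zero_pow (show k ≠ 0 by rintro rfl; exact hk (dvd_zero N))]
  | insert a s ha ih =>
    rw [hindep.integral_add_sum_pow hmeas hC ha]
    refine sum_eq_zero fun i hi ↦ ?_
    by_cases hNi : N ∣ i
    · have hki : ¬ N ∣ k - i := fun h ↦ hk <| by
        simpa [Nat.add_sub_cancel' (Nat.lt_succ_iff.1 (mem_range.1 hi))] using dvd_add hNi h
      rw [hmom a _ hki, mul_zero, zero_mul]
    · rw [ih hNi, zero_mul, zero_mul]

lemma iIndepFun.integral_sum_pow_self (hN : N ≠ 0) (hmeas : ∀ i, Measurable (ξ i))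
    (hindep : iIndepFun ξ μ) (hC : ∀ᵐ ω ∂μ, ∀ i, ‖ξ i ω‖ ≤ C)
    (hmom : ∀ i p, ¬ N ∣ p → ∫ ω, ξ i ω ^ p ∂μ = 0) (s : Finset ι) :
    ∫ ω, (∑ i ∈ s, ξ i ω) ^ N ∂μ = ∑ i ∈ s, ∫ ω, ξ i ω ^ N ∂μ := by
  induction s using Finset.induction_on with
  | empty => simp [zero_pow hN]
  | insert a s ha ih =>
    obtain ⟨M, rfl⟩ := Nat.exists_eq_succ_of_ne_zero hN
    have hmiddle : ∀ i ∈ range M, ∫ ω, (∑ i ∈ s, ξ i ω) ^ (i + 1) ∂μ = 0 := fun i hi ↦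
      hindep.integral_sum_pow_eq_zero hmeas hC hmom s <|
        Nat.not_dvd_of_pos_of_lt i.succ_pos (by simpa using hi)
    rw [hindep.integral_add_sum_pow hmeas hC ha, sum_range_succ, sum_range_succ',
      sum_eq_zero fun i hi ↦ by rw [hmiddle i hi, zero_mul, zero_mul], sum_insert ha, ih]
    simp

end ProbabilityTheory

theorem stmt_2_general {Ω : Type*} [MeasureSpace Ω] [IsProbabilityMeasure (ℙ : Measure Ω)]
    (N : ℕ) (hN : 2 < N) (α β : ℂ) (hβ : β ^ N = α)
    (ξ : ℕ → Ω → ℂ) (hmeas : ∀ k, Measurable (ξ k))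
    (hindep : iIndepFun ξ ℙ)
    (hdist : ∀ k, Measure.map (ξ k) ℙ = (N : ENNReal)⁻¹ •
      ∑ j ∈ Finset.range N,
        Measure.dirac (β * Complex.exp (2 * Real.pi * Complex.I * j / N)))
    (n : ℕ) (t : ℝ) :
    (∀ k : ℕ, ¬ N ∣ k → ∫ ω, (W ξ N n t ω) ^ k ∂ℙ = 0) ∧
    ∫ ω, (W ξ N n t ω) ^ N ∂ℙ = α * (⌊(n : ℝ) * t⌋₊ : ℂ) / (n : ℂ) := by
  have hN0 : N ≠ 0 := by omega
  have hmom : ∀ i p, ∫ ω, ξ i ω ^ p = if N ∣ p then β ^ p else 0 := fun i p ↦ by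
    rw [← integral_map (hmeas i).aemeasurable (continuous_pow p).aestronglyMeasurable, hdist i]
    exact integral_pow_uniformOnRoots hN0 β p
  have hmom0 : ∀ i p, ¬ N ∣ p → ∫ ω, ξ i ω ^ p = 0 := fun i p hp ↦ by rw [hmom, if_neg hp]
  have hbound : ∀ᵐ ω, ∀ i, ‖ξ i ω‖ ≤ ‖β‖ := ae_all_iff.2 fun i ↦
    ae_of_ae_map (hmeas i).aemeasurable (by rw [hdist i]; exact ae_norm_le_uniformOnRoots N β)
  have hW : ∀ k, ∫ ω, W ξ N n t ω ^ k = (((n : ℝ) ^ (-(1 / (N : ℝ))) : ℝ) : ℂ) ^ k *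
      ∫ ω, (∑ i ∈ Icc 1 ⌊(n : ℝ) * t⌋₊, ξ i ω) ^ k := fun k ↦ by
    simp_rw [W, mul_pow]
    exact integral_const_mul _ _
  refine ⟨fun k hk ↦ ?_, ?_⟩
  · rw [hW, hindep.integral_sum_pow_eq_zero hmeas hbound hmom0 _ hk, mul_zero]
  · have hscale : ((n : ℝ) ^ (-(1 / (N : ℝ)))) ^ N = (n : ℝ)⁻¹ := by
      rw [Real.rpow_neg n.cast_nonneg, inv_pow, one_div,
        Real.rpow_inv_natCast_pow n.cast_nonneg hN0]
    rw [hW, hindep.integral_sum_pow_self hN0 hmeas hbound hmom0, ← ofReal_pow, hscale]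
    simp only [hmom, dvd_refl, if_true, hβ, sum_const, Nat.card_Icc, add_tsub_cancel_right,
      nsmul_eq_mul, ofReal_inv, ofReal_natCast]
    ring

/-- for every `n ≥ 1`, `t ≥ 0` and `k` not divisible by `N`,
`E[(W^n(t))^k] = 0`; moreover `E[(W^n(t))^N] = α⌊nt⌋/n`. -/
theorem stmt_2 {Ω : Type*} [MeasureSpace Ω] [IsProbabilityMeasure (ℙ : Measure Ω)]
    (N : ℕ) (hN : 2 < N) (α β : ℂ) (hα : α ≠ 0) (hβ : β ^ N = α)
    (ξ : ℕ → Ω → ℂ) (hmeas : ∀ k, Measurable (ξ k))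
    (hindep : iIndepFun ξ ℙ)
    (hdist : ∀ k, Measure.map (ξ k) ℙ = (N : ENNReal)⁻¹ •
      ∑ j ∈ Finset.range N,
        Measure.dirac (β * Complex.exp (2 * Real.pi * Complex.I * j / N)))
    (n : ℕ) (hn : 1 ≤ n) (t : ℝ) (ht : 0 ≤ t) :
    (∀ k : ℕ, ¬ N ∣ k → ∫ ω, (W ξ N n t ω) ^ k ∂ℙ = 0) ∧
    ∫ ω, (W ξ N n t ω) ^ N ∂ℙ = α * (⌊(n : ℝ) * t⌋₊ : ℂ) / (n : ℂ) :=
  stmt_2_general N hN α β hβ ξ hmeas hindep hdist n t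
end

section
/- Let g : ℂ → ℂ be an analytic function of exponential type c < ∞. Then the following Itô formula holds pointwise on Ω: for every z ∈ ℂ, n ≥ 1 and t ≥ 0, the series Σ_{k=1}^∞ (1/k!) · ∫_0^t g^{(k)}(z + W^n(s)) d(W^n(s))^k converges and equals g(z + W^n(t)) − g(z), where ∫_0^t g^{(k)}(z + W^n(s)) d(W^n(s))^k := n^{−k/N} · Σ_{τ=0}^{⌊nt⌋−1} g^{(k)}(z + W^n(τ/n)) · (ξ_{τ+1})^k. -/
open MeasureTheory ProbabilityTheory Filter

/-- The discrete Itô integral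
`∫₀ᵗ g(W^n(s)) d(W^n(s))^k := n^{-k/N} ∑_{τ=0}^{⌊nt⌋−1} g(W^n(τ/n))·(ξ_{τ+1})^k`. -/
noncomputable def itoInt {Ω : Type*} (ξ : ℕ → Ω → ℂ) (N : ℕ) (g : ℂ → ℂ)
    (k n : ℕ) (t : ℝ) (ω : Ω) : ℂ :=
  (((n : ℝ) ^ (-((k : ℝ) / (N : ℝ))) : ℝ) : ℂ) *
    ∑ τ ∈ Finset.range ⌊(n : ℝ) * t⌋₊, g (W ξ N n ((τ : ℝ) / (n : ℝ)) ω) * (ξ (τ + 1) ω) ^ k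

/-!
The Itô formula for the walk holds path by path and is nothing but Taylor's theorem: along a
path the walk moves through the points `z + W^n(τ/n)` in steps `n^{-1/N} ξ_{τ+1}`, an entire
function equals its Taylor series around each point everywhere, so each increment of `g` is the
Taylor series of `g` evaluated at the step, and summing over the steps telescopes to
`g(z + W^n(t)) - g(z)`. The `k`-th discrete Itô integral collects the `k`-th Taylor terms.
-/

open Finset Nat

section Taylor

variable {E : Type*} [NormedAddCommGroup E] [NormedSpace ℂ E] [CompleteSpace E]
  {f : ℂ → E}

theorem Complex.hasSum_taylorSeries_sub_of_entire (hf : Differentiable ℂ f) (x h : ℂ) :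
    HasSum (fun k : ℕ ↦ ((k + 1)! : ℂ)⁻¹ • h ^ (k + 1) • iteratedDeriv (k + 1) f x)
      (f (x + h) - f x) := by
  have hsum := Complex.hasSum_taylorSeries_of_entire hf x (x + h)
  rw [add_sub_cancel_left] at hsum
  simpa using (hasSum_nat_add_iff' 1).mpr hsum

theorem Complex.hasSum_sum_taylorSeries_increments_of_entire (hf : Differentiable ℂ f)
    (S : ℕ → ℂ) (m : ℕ) :
    HasSum (fun k : ℕ ↦ ((k + 1)! : ℂ)⁻¹ •
        ∑ τ ∈ range m, (S (τ + 1) - S τ) ^ (k + 1) • iteratedDeriv (k + 1) f (S τ))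
      (f (S m) - f (S 0)) := by
  have hsum := hasSum_sum fun τ (_ : τ ∈ range m) ↦
    Complex.hasSum_taylorSeries_sub_of_entire hf (S τ) (S (τ + 1) - S τ)
  simp only [add_sub_cancel, sum_range_sub fun τ ↦ f (S τ)] at hsum
  simpa only [smul_sum] using hsum

end Taylor

section Walk

variable {Ω : Type*} (ξ : ℕ → Ω → ℂ) (N : ℕ) {n : ℕ} (ω : Ω)

theorem W_natCast_div (hn : n ≠ 0) (τ : ℕ) :
    W ξ N n (τ / n) ω
      = (((n : ℝ) ^ (-(1 / (N : ℝ))) : ℝ) : ℂ) * ∑ k ∈ Icc 1 τ, ξ k ω := by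
  rw [W, mul_div_cancel₀ _ (Nat.cast_ne_zero.mpr hn), Nat.floor_natCast]

theorem W_zero : W ξ N n 0 ω = 0 := by
  simp [W]

theorem W_floor_div (hn : n ≠ 0) (t : ℝ) :
    W ξ N n (⌊(n : ℝ) * t⌋₊ / n) ω = W ξ N n t ω := by
  rw [W_natCast_div ξ N ω hn, W]

theorem W_natCast_succ_div_sub (hn : n ≠ 0) (τ : ℕ) :
    W ξ N n ((τ + 1 : ℕ) / n) ω - W ξ N n (τ / n) ω
      = (((n : ℝ) ^ (-(1 / (N : ℝ))) : ℝ) : ℂ) * ξ (τ + 1) ω := by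
  rw [W_natCast_div ξ N ω hn, W_natCast_div ξ N ω hn, sum_Icc_succ_top (by omega)]
  ring

theorem itoInt_eq_sum_increments (hn : n ≠ 0) (f : ℂ → ℂ) (k : ℕ) (t : ℝ) :
    itoInt ξ N f k n t ω = ∑ τ ∈ range ⌊(n : ℝ) * t⌋₊,
      f (W ξ N n (τ / n) ω) * (W ξ N n ((τ + 1 : ℕ) / n) ω - W ξ N n (τ / n) ω) ^ k := by
  have hpow : (((n : ℝ) ^ (-((k : ℝ) / N)) : ℝ) : ℂ)
      = (((n : ℝ) ^ (-(1 / (N : ℝ))) : ℝ) : ℂ) ^ k := by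
    rw [← Complex.ofReal_pow, ← Real.rpow_mul_natCast (Nat.cast_nonneg n)]
    ring_nf
  simp only [itoInt, W_natCast_succ_div_sub ξ N ω hn, hpow, mul_sum, mul_pow]
  exact sum_congr rfl fun τ _ ↦ by ring

end Walk

theorem stmt_12_general {Ω : Type*} (N : ℕ) (ξ : ℕ → Ω → ℂ)
    (g : ℂ → ℂ) (hg : Differentiable ℂ g) (z : ℂ) (n : ℕ) (hn : 1 ≤ n) (t : ℝ) (ω : Ω) :
    HasSum
      (fun k : ℕ => (1 / (((k + 1).factorial : ℕ) : ℂ)) *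
        itoInt ξ N (fun w => iteratedDeriv (k + 1) g (z + w)) (k + 1) n t ω)
      (g (z + W ξ N n t ω) - g z) := by
  have hn0 : n ≠ 0 := by omega
  have hito := Complex.hasSum_sum_taylorSeries_increments_of_entire hg
    (fun τ : ℕ ↦ z + W ξ N n (τ / n) ω) ⌊(n : ℝ) * t⌋₊
  simp only [add_sub_add_left_eq_sub, Nat.cast_zero, zero_div, W_zero, add_zero,
    W_floor_div ξ N ω hn0, smul_eq_mul] at hito
  refine hito.congr_fun fun k ↦ ?_
  rw [itoInt_eq_sum_increments ξ N ω hn0, one_div]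
  exact congrArg _ (sum_congr rfl fun τ _ ↦ mul_comm _ _)

/-- (Itô formula) let `g : ℂ → ℂ` be an entire analytic function of
exponential type `c < ∞`. Then pointwise on `Ω`, for every `z ∈ ℂ`, `n ≥ 1` and
`t ≥ 0`, the series `∑_{k≥1} (1/k!)·∫₀ᵗ g^{(k)}(z + W^n(s)) d(W^n(s))^k` converges and
equals `g(z + W^n(t)) − g(z)`.  (The sum over `k ≥ 1` is indexed below by `k + 1`,
`k : ℕ`.) -/
theorem stmt_12 {Ω : Type*} [MeasureSpace Ω] [IsProbabilityMeasure (ℙ : Measure Ω)]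
    (N : ℕ) (hN : 2 < N) (α β : ℂ) (hα : α ≠ 0) (hβ : β ^ N = α)
    (ξ : ℕ → Ω → ℂ) (hmeas : ∀ k, Measurable (ξ k))
    (hindep : iIndepFun ξ ℙ)
    (hdist : ∀ k, Measure.map (ξ k) ℙ = (N : ENNReal)⁻¹ •
      ∑ j ∈ Finset.range N,
        Measure.dirac (β * Complex.exp (2 * Real.pi * Complex.I * j / N)))
    (g : ℂ → ℂ) (hg : Differentiable ℂ g) (c : ℝ) (hc : 0 ≤ c)
    (htype : Tendsto (fun k : ℕ => ‖iteratedDeriv k g 0‖ ^ (1 / (k : ℝ)))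
      atTop (nhds c))
    (z : ℂ) (n : ℕ) (hn : 1 ≤ n) (t : ℝ) (ht : 0 ≤ t) (ω : Ω) :
    HasSum
      (fun k : ℕ => (1 / (((k + 1).factorial : ℕ) : ℂ)) *
        itoInt ξ N (fun w => iteratedDeriv (k + 1) g (z + w)) (k + 1) n t ω)
      (g (z + W ξ N n t ω) - g z) :=
  stmt_12_general N ξ g hg z n hn t ω
end
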